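/- Let S : {0,1}ⁿ → {0,1}ⁿ with RG(S) having no directed cycle. Then the asynchronous dynamics of S is simple: there is a unique fixed point α of S, and from every state x there is a path in the asynchronous STG of length at most n from x to α. -/
import Mathlib


def flipCoord {n : ℕ} (x : Fin n → Bool) (j : Fin n) : Fin n → Bool :=
  Function.update x j (!(x j))

def RGEdge {n : ℕ} (S : (Fin n → Bool) → Fin n → Bool) (i j : Fin n) : Prop :=
  ∃ x, S x j ≠ S (flipCoord x i) j

def AStep {n : ℕ} (S : (Fin n → Bool) → Fin n → Bool) (x y : Fin n → Bool) : Prop :=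
  ∃ i : Fin n, S x i ≠ x i ∧ y = flipCoord x i

-- auxiliary material

private lemma bool_flip {a b : Bool} (h : a ≠ b) : (!a) = b := by
  cases a <;> cases b <;> simp_all

private lemma bool_flip' {a b : Bool} (h : a ≠ b) : a = (!b) := by
  cases a <;> cases b <;> simp_all

/-- `S · j` depends only on coordinates `i` with an RG-edge to `j`. -/
lemma dep {n : ℕ} (S : (Fin n → Bool) → Fin n → Bool) (j : Fin n) :
    ∀ x y : Fin n → Bool, (∀ i, RGEdge S i j → x i = y i) → S x j = S y j := by
  classical
  suffices h : ∀ (c : ℕ) (x y : Fin n → Bool),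
      (Finset.univ.filter fun i => x i ≠ y i).card ≤ c →
      (∀ i, RGEdge S i j → x i = y i) → S x j = S y j by
    intro x y hxy; exact h _ x y le_rfl hxy
  intro c
  induction c with
  | zero =>
    intro x y hc hxy
    have hx : x = y := by
      funext i
      by_contra hi
      have : i ∈ Finset.univ.filter fun i => x i ≠ y i := by simp [hi]
      have := Finset.card_pos.2 ⟨i, this⟩
      omega
    rw [hx]
  | succ c ih =>
    intro x y hc hxy
    by_cases hd : ∀ i, x i = y i
    · rw [funext hd]
    · push_neg at hd
      obtain ⟨i, hi⟩ := hd
      have hne : ¬ RGEdge S i j := fun h => hi (hxy i h)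
      rw [RGEdge] at hne
      push_neg at hne
      have hstep : S x j = S (flipCoord x i) j := hne x
      rw [hstep]
      apply ih (flipCoord x i) y
      · have hsub : (Finset.univ.filter fun k => flipCoord x i k ≠ y k) ⊆
            (Finset.univ.filter fun k => x k ≠ y k).erase i := by
          intro k hk
          simp only [Finset.mem_filter, Finset.mem_univ, true_and] at hk
          by_cases hki : k = i
          · subst hki
            exact absurd (show flipCoord x k k = y k by
              simp only [flipCoord, Function.update_self]; exact @bool_flip (x k) (y k) hi) hk
          · simp only [Finset.mem_erase, Finset.mem_filter, Finset.mem_univ, true_and]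
            refine ⟨hki, ?_⟩
            simpa [flipCoord, Function.update_of_ne hki] using hk
        have hmem : i ∈ Finset.univ.filter fun k => x k ≠ y k := by simp [hi]
        have h1 := Finset.card_le_card hsub
        have h2 := Finset.card_erase_of_mem hmem
        omega
      · intro i' hi'
        have hii' : i' ≠ i := fun h => hi (hxy i (h ▸ hi'))
        rw [show flipCoord x i i' = x i' from Function.update_of_ne hii' _ _]
        exact hxy i' hi'

noncomputable def rnk {n : ℕ} (S : (Fin n → Bool) → Fin n → Bool) (j : Fin n) : ℕ :=
  @Finset.card (Fin n)
    (@Finset.filter (Fin n) (fun i => Relation.TransGen (RGEdge S) i j)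
      (Classical.decPred _) Finset.univ)

lemma rnk_lt {n : ℕ} {S : (Fin n → Bool) → Fin n → Bool}
    (hacyc : ∀ v : Fin n, ¬ Relation.TransGen (RGEdge S) v v)
    {i j : Fin n} (h : RGEdge S i j) : rnk S i < rnk S j := by
  classical
  unfold rnk
  apply Finset.card_lt_card
  constructor
  · intro k hk
    simp only [Finset.mem_filter, Finset.mem_univ, true_and] at hk ⊢
    exact hk.tail h
  · intro hsub
    have hij : i ∈ (@Finset.filter (Fin n) (fun k => Relation.TransGen (RGEdge S) k j)
        (Classical.decPred _) Finset.univ) := by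
      simp only [Finset.mem_filter, Finset.mem_univ, true_and]
      exact Relation.TransGen.single h
    have := hsub hij
    simp only [Finset.mem_filter, Finset.mem_univ, true_and] at this
    exact hacyc i this

noncomputable def asyncF {n : ℕ} (S : (Fin n → Bool) → Fin n → Bool) (q : ℕ → Fin n)
    (x : Fin n → Bool) : ℕ → (Fin n → Bool)
  | 0 => x
  | m + 1 => Function.update (asyncF S q x m) (q m) (S (asyncF S q x m) (q m))

/-- Asynchronous version of Robert's theorem: if `RG(S)` is acyclic, then `S` has a
unique fixed point `α` and from every state there is an asynchronous path of length
at most `n` to `α`. -/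
theorem robert_asynchronous {n : ℕ} (S : (Fin n → Bool) → Fin n → Bool)
    (hacyc : ∀ v : Fin n, ¬ Relation.TransGen (RGEdge S) v v) :
    ∃ α : Fin n → Bool, S α = α ∧ (∀ β : Fin n → Bool, S β = β → β = α) ∧
      ∀ x : Fin n → Bool, ∃ k ≤ n, ∃ f : ℕ → (Fin n → Bool),
        f 0 = x ∧ f k = α ∧ ∀ m < k, AStep S (f m) (f (m + 1)) := by
  classical
  rcases Nat.eq_zero_or_pos n with hn | hn
  · subst hn
    refine ⟨fun _ => false, funext fun i => i.elim0, fun β _ => funext fun i => i.elim0, ?_⟩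
    intro x
    exact ⟨0, le_rfl, fun _ => x, rfl, funext fun i => i.elim0, by omega⟩
  have hirr : ∀ i : Fin n, ¬ RGEdge S i i := fun i h => hacyc i (Relation.TransGen.single h)
  set σ : Equiv.Perm (Fin n) := Tuple.sort (rnk S) with hσ
  have hmono : Monotone (rnk S ∘ σ) := Tuple.monotone_sort (rnk S)
  have hpos : ∀ i j : Fin n, RGEdge S i j → (σ.symm i : ℕ) < (σ.symm j : ℕ) := by
    intro i j h
    by_contra hle
    push_neg at hle
    have : σ.symm j ≤ σ.symm i := by exact_mod_cast hle
    have := hmono this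
    simp only [Function.comp_apply, Equiv.apply_symm_apply] at this
    exact absurd (rnk_lt hacyc h) (not_lt.2 this)
  set q : ℕ → Fin n := fun m => σ ⟨m % n, Nat.mod_lt _ hn⟩ with hq
  have hqs : ∀ m, m < n → (σ.symm (q m) : ℕ) = m := by
    intro m hm
    simp [hq, Nat.mod_eq_of_lt hm]
  -- key invariant
  have key : ∀ m, m ≤ n → ∀ x y : Fin n → Bool, ∀ j : Fin n, (σ.symm j : ℕ) < m →
      asyncF S q x m j = S (asyncF S q x m) j ∧ asyncF S q x m j = asyncF S q y m j := by
    intro m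
    induction m with
    | zero => intro _ x y j hj; omega
    | succ m ih =>
      intro hm x y j hj
      have hmn : m < n := hm
      have hqm := hqs m hmn
      have hFx : asyncF S q x (m + 1)
          = Function.update (asyncF S q x m) (q m) (S (asyncF S q x m) (q m)) := rfl
      have hFy : asyncF S q y (m + 1)
          = Function.update (asyncF S q y m) (q m) (S (asyncF S q y m) (q m)) := rfl
      have ihm := ih (Nat.le_of_lt hmn)
      by_cases hjq : j = q m
      · subst hjq
        constructor
        · rw [hFx, Function.update_self]
          apply dep
          intro i hij
          by_cases hiq : i = q m
          · exact absurd (hiq ▸ hij) (hirr _)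
          · rw [Function.update_of_ne hiq]
        · rw [hFx, hFy, Function.update_self, Function.update_self]
          apply dep
          intro i hij
          have hlt : (σ.symm i : ℕ) < m := by
            have := hpos i (q m) hij
            omega
          exact (ihm x y i hlt).2
      · have hjm : (σ.symm j : ℕ) < m := by
          rcases Nat.lt_or_ge (σ.symm j : ℕ) m with h | h
          · exact h
          · exfalso
            have : (σ.symm j : ℕ) = m := by omega
            have : σ.symm j = σ.symm (q m) := Fin.ext (by omega)
            exact hjq (σ.symm.injective this)
        have hupd : asyncF S q x (m + 1) j = asyncF S q x m j := by
          rw [hFx, Function.update_of_ne hjq]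
        constructor
        · rw [hupd, (ihm x y j hjm).1]
          apply dep
          intro i hij
          by_cases hiq : i = q m
          · exfalso
            have := hpos i j hij
            rw [hiq, hqm] at this
            omega
          · rw [hFx, Function.update_of_ne hiq]
        · rw [hupd, (ihm x y j hjm).2]
          rw [hFy, Function.update_of_ne hjq]
  set α : Fin n → Bool := asyncF S q (fun _ => false) n with hα
  have hend : ∀ x, asyncF S q x n = α := by
    intro x
    funext j
    exact (key n le_rfl x (fun _ => false) j (σ.symm j).isLt).2
  have hfix : S α = α := by
    funext j
    exact ((key n le_rfl (fun _ => false) (fun _ => false) j (σ.symm j).isLt).1).symm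
  refine ⟨α, hfix, ?_, ?_⟩
  · intro β hβ
    have hβm : ∀ m, asyncF S q β m = β := by
      intro m
      induction m with
      | zero => rfl
      | succ m ihm =>
        show Function.update (asyncF S q β m) (q m) (S (asyncF S q β m) (q m)) = β
        rw [ihm, show S β (q m) = β (q m) from congrFun hβ (q m), Function.update_eq_self]
    calc β = asyncF S q β n := (hβm n).symm
      _ = α := hend β
  · intro x
    have path : ∀ m : ℕ, ∃ k ≤ m, ∃ f : ℕ → (Fin n → Bool),
        f 0 = x ∧ f k = asyncF S q x m ∧ ∀ l < k, AStep S (f l) (f (l + 1)) := by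
      intro m
      induction m with
      | zero => exact ⟨0, le_rfl, fun _ => x, rfl, rfl, by omega⟩
      | succ m ih =>
        obtain ⟨k, hk, f, hf0, hfk, hstep⟩ := ih
        by_cases h : S (asyncF S q x m) (q m) = asyncF S q x m (q m)
        · refine ⟨k, hk.trans (Nat.le_succ m), f, hf0, ?_, hstep⟩
          show f k = Function.update (asyncF S q x m) (q m) (S (asyncF S q x m) (q m))
          rw [h, Function.update_eq_self, hfk]
        · refine ⟨k + 1, by omega, fun l => if l ≤ k then f l else asyncF S q x (m + 1),
            ?_, ?_, ?_⟩
          · simp [hf0]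
          · simp
          · intro l hl
            rcases Nat.lt_or_ge l k with h' | h'
            · have h1 : l ≤ k := le_of_lt h'
              have h2 : l + 1 ≤ k := h'
              simp only [if_pos h1, if_pos h2]
              exact hstep l h'
            · have hlk : l = k := by omega
              subst hlk
              simp only [if_pos (le_refl l), if_neg (by omega : ¬ l + 1 ≤ l)]
              refine ⟨q m, ?_, ?_⟩
              · rw [hfk]; exact h
              · rw [hfk]
                show Function.update (asyncF S q x m) (q m) (S (asyncF S q x m) (q m))
                  = flipCoord (asyncF S q x m) (q m)
                unfold flipCoord
                rw [bool_flip' h]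
    obtain ⟨k, hk, f, hf0, hfk, hstep⟩ := path n
    exact ⟨k, hk, f, hf0, by rw [hfk, hend], hstep⟩
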